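/- Let μ be a free P₀-measure on ℕ and ν a free measure with ν ≤_RK μ. Then ν ≤_RB μ. Moreover, if μ is a P-measure (respectively, a P₀-measure) and ν ≤_RB μ, then ν is a P-measure (respectively, a P₀-measure). -/

import Mathlib

open Filter

/-- A finitely additive probability measure defined on all subsets of `ℕ`. -/
def IsMeasure (μ : Set ℕ → ℝ) : Prop :=
  (∀ A : Set ℕ, 0 ≤ μ A ∧ μ A ≤ 1) ∧ μ Set.univ = 1 ∧
    ∀ A B : Set ℕ, Disjoint A B → μ (A ∪ B) = μ A + μ B

/-- A measure is free if it vanishes on finite sets. -/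
def IsFree (μ : Set ℕ → ℝ) : Prop := ∀ A : Set ℕ, A.Finite → μ A = 0

/-- A function is finite-to-one if all fibers are finite. -/
def FinToOne (f : ℕ → ℕ) : Prop := ∀ n : ℕ, (f ⁻¹' {n}).Finite

/-- Rudin-Blass reducibility: `ν ≤_RB μ` via a finite-to-one map. -/
def RBLe (ν μ : Set ℕ → ℝ) : Prop :=
  ∃ f : ℕ → ℕ, FinToOne f ∧ ∀ A : Set ℕ, μ (f ⁻¹' A) = ν A

/-- Rudin-Keisler reducibility: `ν ≤_RK μ`. -/
def RKLe (ν μ : Set ℕ → ℝ) : Prop :=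
  ∃ f : ℕ → ℕ, ∀ A : Set ℕ, μ (f ⁻¹' A) = ν A

/-- A measure is shift invariant if `μ(A + 1) = μ(A)`. -/
def ShiftInvariant (μ : Set ℕ → ℝ) : Prop :=
  ∀ A : Set ℕ, μ ((fun n => n + 1) '' A) = μ A

/-- A measure extends the asymptotic density. -/
def ExtendsDensity (μ : Set ℕ → ℝ) : Prop :=
  ∀ (A : Set ℕ) (d : ℝ),
    Tendsto (fun n : ℕ => ((A ∩ Set.Iio n).ncard : ℝ) / n) atTop (nhds d) → μ A = d

/-- A partition of `ℕ` indexed by `ℕ`. -/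
def IsPartition (A : ℕ → Set ℕ) : Prop :=
  Pairwise (Function.onFun Disjoint A) ∧ (⋃ n, A n) = Set.univ

/-- A selector of a partition: meets each piece in at most one point. -/
def IsSelector (S : Set ℕ) (A : ℕ → Set ℕ) : Prop :=
  ∀ n : ℕ, (S ∩ A n).Subsingleton

/-- A Q-measure: each partition into finite sets has a selector of full measure. -/
def IsQMeasure (μ : Set ℕ → ℝ) : Prop :=
  ∀ A : ℕ → Set ℕ, IsPartition A → (∀ n, (A n).Finite) →
    ∃ S : Set ℕ, IsSelector S A ∧ μ S = 1

/-- A Q⁺-measure: each partition into finite sets has a selector of positive measure. -/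
def IsQPlusMeasure (μ : Set ℕ → ℝ) : Prop :=
  ∀ A : ℕ → Set ℕ, IsPartition A → (∀ n, (A n).Finite) →
    ∃ S : Set ℕ, IsSelector S A ∧ 0 < μ S

/-- A P-measure: each partition has a pseudo-selector of the largest possible measure. -/
def IsPMeasure (μ : Set ℕ → ℝ) : Prop :=
  ∀ A : ℕ → Set ℕ, IsPartition A →
    ∃ S : Set ℕ, (∀ n, (S ∩ A n).Finite) ∧ μ S = 1 - ∑' n, μ (A n)

/-- A selective measure: each partition has a selector of the largest possible measure. -/
def IsSelectiveMeasure (μ : Set ℕ → ℝ) : Prop :=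
  ∀ A : ℕ → Set ℕ, IsPartition A →
    ∃ S : Set ℕ, IsSelector S A ∧ μ S = 1 - ∑' n, μ (A n)

/-- A non-atomic measure: finite partitions into pieces of arbitrarily small measure. -/
def NonAtomic (μ : Set ℕ → ℝ) : Prop :=
  ∀ ε : ℝ, 0 < ε → ∃ (N : ℕ) (P : Fin N → Set ℕ),
    Pairwise (Function.onFun Disjoint P) ∧ (⋃ i, P i) = Set.univ ∧ ∀ i, μ (P i) < ε

/-- The continuum hypothesis: `2 ^ ℵ₀ = ℵ₁`. -/
def CH : Prop := (2 : Cardinal.{0}) ^ Cardinal.aleph0.{0} = Cardinal.aleph.{0} 1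

/-- A P₀-measure: every decreasing sequence of measure-one sets has a measure-one
pseudo-intersection. -/
def IsP0Measure (μ : Set ℕ → ℝ) : Prop :=
  ∀ A : ℕ → Set ℕ, (∀ n, A (n + 1) ⊆ A n) → (∀ n, μ (A n) = 1) →
    ∃ P : Set ℕ, (∀ n, (P \ A n).Finite) ∧ μ P = 1

/-!
If `f` pushes `μ` forward to a free `ν`, the sets `f⁻¹[n, ∞)` all have `μ`-measure one. A
measure-one pseudo-intersection `P` of them, which exists when `μ` is a P₀-measure, is a set on
which `f` is finite-to-one; redefining `f` as the identity off `P` yields a finite-to-one map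
with the same pushforward.

For heredity, pull the partition (resp. decreasing sequence) back along `f`, apply the property of
`μ`, and push the witness forward: `f '' S` meets `B` in `f '' (S ∩ f⁻¹ B)`. For P-measures, the
bound `ν (f '' S) ≤ 1 - ∑ ν (B n)` holds for free `ν` and any set meeting every piece `B n`
finitely.
-/

namespace IsMeasure

variable {μ : Set ℕ → ℝ} (hμ : IsMeasure μ)
include hμ

lemma nonneg (A : Set ℕ) : 0 ≤ μ A := (hμ.1 A).1

lemma le_one (A : Set ℕ) : μ A ≤ 1 := (hμ.1 A).2

lemma union_eq_add {A B : Set ℕ} (h : Disjoint A B) : μ (A ∪ B) = μ A + μ B :=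
  hμ.2.2 A B h

lemma inter_add_diff (A P : Set ℕ) : μ (A ∩ P) + μ (A \ P) = μ A := by
  rw [← hμ.union_eq_add (Set.disjoint_sdiff_inter.symm), Set.inter_union_sdiff]

lemma mono {A B : Set ℕ} (h : A ⊆ B) : μ A ≤ μ B := by
  have := hμ.inter_add_diff B A
  rw [Set.inter_eq_right.mpr h] at this
  linarith [hμ.nonneg (B \ A)]

lemma compl (A : Set ℕ) : μ Aᶜ = 1 - μ A := by
  have := hμ.union_eq_add (disjoint_compl_right (a := A))
  rw [Set.union_compl_self, hμ.2.1] at this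
  linarith

lemma eq_one_of_subset {P Q : Set ℕ} (hP : μ P = 1) (h : P ⊆ Q) : μ Q = 1 :=
  le_antisymm (hμ.le_one Q) (hP ▸ hμ.mono h)

lemma inter_eq_of_eq_one {P : Set ℕ} (hP : μ P = 1) (A : Set ℕ) : μ (A ∩ P) = μ A := by
  have hdiff : μ (A \ P) = 0 := by
    have : μ (A \ P) ≤ μ Pᶜ := hμ.mono fun x hx => hx.2
    rw [hμ.compl, hP, sub_self] at this
    exact le_antisymm this (hμ.nonneg _)
  linarith [hμ.inter_add_diff A P]

lemma biUnion_range {B : ℕ → Set ℕ} (hB : Pairwise (Function.onFun Disjoint B)) (k : ℕ) :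
    μ (⋃ n ∈ Finset.range k, B n) = ∑ n ∈ Finset.range k, μ (B n) := by
  induction k with
  | zero => simpa using (hμ.compl Set.univ).trans (by rw [hμ.2.1, sub_self])
  | succ k ih =>
    have hdisj : Disjoint (B k) (⋃ n ∈ Finset.range k, B n) := by
      simp only [Set.disjoint_iUnion_right]
      exact fun n hn => hB (by simp at hn; omega)
    rw [Finset.range_add_one, Finset.set_biUnion_insert, hμ.union_eq_add hdisj, ih,
      Finset.sum_insert (by simp)]

lemma summable_of_pairwise_disjoint {B : ℕ → Set ℕ} (hB : Pairwise (Function.onFun Disjoint B)) :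
    Summable fun n => μ (B n) :=
  summable_of_sum_range_le (fun n => hμ.nonneg (B n)) fun k =>
    hμ.biUnion_range hB k ▸ hμ.le_one _

lemma Ici_eq_one (hfree : IsFree μ) (n : ℕ) : μ (Set.Ici n) = 1 := by
  rw [← compl_compl (Set.Ici n), Set.compl_Ici, hμ.compl, hfree _ (Set.finite_Iio n), sub_zero]

lemma le_one_sub_tsum_of_inter_finite (hfree : IsFree μ) {B : ℕ → Set ℕ} (hB : IsPartition B)
    {T : Set ℕ} (hT : ∀ n, (T ∩ B n).Finite) : μ T ≤ 1 - ∑' n, μ (B n) := by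
  refine ge_of_tendsto' (tendsto_const_nhds.sub
    (hμ.summable_of_pairwise_disjoint hB.1).hasSum.tendsto_sum_nat) fun k => ?_
  set U := ⋃ n ∈ Finset.range k, B n
  have hfin : μ (T ∩ U) = 0 := hfree _ <| by
    rw [Set.inter_iUnion₂]
    exact (Finset.range k).finite_toSet.biUnion fun n _ => hT n
  have hrest : μ (T \ U) ≤ μ Uᶜ := hμ.mono fun x hx => hx.2
  rw [hμ.compl, hμ.biUnion_range hB.1] at hrest
  linarith [hμ.inter_add_diff T U]

end IsMeasure

lemma RBLe.rKLe {ν μ : Set ℕ → ℝ} (h : RBLe ν μ) : RKLe ν μ :=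
  let ⟨f, _, hf⟩ := h; ⟨f, hf⟩

lemma finToOne_piecewise_id {f : ℕ → ℕ} {P : Set ℕ} [DecidablePred (· ∈ P)]
    (hP : ∀ n, (P \ f ⁻¹' Set.Ici n).Finite) : FinToOne (P.piecewise f id) := by
  intro k
  refine ((hP (k + 1)).union (Set.finite_singleton k)).subset fun m hm => ?_
  by_cases hmP : m ∈ P
  · simp only [Set.mem_preimage, Set.piecewise_eq_of_mem _ _ _ hmP, Set.mem_singleton_iff] at hm
    exact Or.inl ⟨hmP, by simp [hm]⟩
  · simp only [Set.mem_preimage, Set.piecewise_eq_of_notMem _ _ _ hmP, id,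
      Set.mem_singleton_iff] at hm
    exact Or.inr hm

lemma IsMeasure.preimage_piecewise {μ : Set ℕ → ℝ} (hμ : IsMeasure μ) {P : Set ℕ}
    [DecidablePred (· ∈ P)] (hP : μ P = 1) (f g : ℕ → ℕ) (C : Set ℕ) :
    μ (P.piecewise f g ⁻¹' C) = μ (f ⁻¹' C) := by
  rw [← hμ.inter_eq_of_eq_one hP, ← hμ.inter_eq_of_eq_one hP (f ⁻¹' C), Set.piecewise_preimage,
    Set.ite_inter_self]

theorem RKLe.rBLe_of_isP0Measure {ν μ : Set ℕ → ℝ} (hμ : IsMeasure μ) (hμP0 : IsP0Measure μ)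
    (hν : IsMeasure ν) (hνfree : IsFree ν) (h : RKLe ν μ) : RBLe ν μ := by
  classical
  obtain ⟨f, hf⟩ := h
  obtain ⟨P, hPfin, hP⟩ := hμP0 (fun n => f ⁻¹' Set.Ici n)
    (fun n => Set.preimage_mono (Set.Ici_subset_Ici.mpr n.le_succ))
    (fun n => (hf _).trans (hν.Ici_eq_one hνfree n))
  exact ⟨P.piecewise f id, finToOne_piecewise_id hPfin,
    fun C => (hμ.preimage_piecewise hP f id C).trans (hf C)⟩

theorem IsPMeasure.of_rKLe {ν μ : Set ℕ → ℝ} (hμ : IsMeasure μ) (hμP : IsPMeasure μ)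
    (hν : IsMeasure ν) (hνfree : IsFree ν) (h : RKLe ν μ) : IsPMeasure ν := by
  obtain ⟨f, hf⟩ := h
  intro B hB
  have hpull : IsPartition fun n => f ⁻¹' B n :=
    ⟨fun i j hij => (hB.1 hij).preimage f, by simp only [← Set.preimage_iUnion, hB.2,
      Set.preimage_univ]⟩
  obtain ⟨S, hSfin, hS⟩ := hμP _ hpull
  simp only [hf] at hS
  have hfin : ∀ n, (f '' S ∩ B n).Finite := fun n =>
    Set.image_inter_preimage f S (B n) ▸ (hSfin n).image f
  refine ⟨f '' S, hfin, le_antisymm (hν.le_one_sub_tsum_of_inter_finite hνfree hB hfin) ?_⟩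
  calc 1 - ∑' n, ν (B n) = μ S := hS.symm
    _ ≤ μ (f ⁻¹' (f '' S)) := hμ.mono (Set.subset_preimage_image f S)
    _ = ν (f '' S) := hf _

theorem IsP0Measure.of_rKLe {ν μ : Set ℕ → ℝ} (hμ : IsMeasure μ) (hμP0 : IsP0Measure μ)
    (h : RKLe ν μ) : IsP0Measure ν := by
  obtain ⟨f, hf⟩ := h
  intro B hBdec hBone
  obtain ⟨P, hPfin, hP⟩ := hμP0 (fun n => f ⁻¹' B n) (fun n => Set.preimage_mono (hBdec n))
    (fun n => (hf _).trans (hBone n))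
  exact ⟨f '' P, fun n => Set.image_sdiff_preimage ▸ (hPfin n).image f,
    hf (f '' P) ▸ hμ.eq_one_of_subset hP (Set.subset_preimage_image f P)⟩

/-- Below a P₀-measure, `≤_RK` collapses to `≤_RB`; moreover the properties of being
a P-measure and of being a P₀-measure are RB-hereditary. -/
theorem stmt_14 :
    (∀ μ ν : Set ℕ → ℝ, IsMeasure μ → IsFree μ → IsP0Measure μ →
      IsMeasure ν → IsFree ν → RKLe ν μ → RBLe ν μ) ∧
    (∀ μ ν : Set ℕ → ℝ, IsMeasure μ → IsFree μ → IsPMeasure μ →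
      IsMeasure ν → IsFree ν → RBLe ν μ → IsPMeasure ν) ∧
    (∀ μ ν : Set ℕ → ℝ, IsMeasure μ → IsFree μ → IsP0Measure μ →
      IsMeasure ν → IsFree ν → RBLe ν μ → IsP0Measure ν) :=
  ⟨fun _ _ hμ _ hμP0 hν hνfree h => h.rBLe_of_isP0Measure hμ hμP0 hν hνfree,
    fun _ _ hμ _ hμP hν hνfree h => IsPMeasure.of_rKLe hμ hμP hν hνfree h.rKLe,
    fun _ _ hμ _ hμP0 _ _ h => IsP0Measure.of_rKLe hμ hμP0 h.rKLe⟩
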